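/- Let C be a finite category and e an idempotent of the consolidation monoid C^cd with e ≠ 0 and e ≠ 1. Then e lies in some local monoid C_c = C(c,c), and the maximal subgroup of C^cd at e (the group of units of eC^cd e) equals the maximal subgroup of C_c at e. -/

import Mathlib

/-- A finite category presented by its set of arrows with a partial composition. -/
structure FinCat (Obj : Type) where
  Arr : Type
  src : Arr → Obj
  tgt : Arr → Obj
  id : Obj → Arr
  comp : (f g : Arr) → tgt f = src g → Arr
  src_id : ∀ a, src (id a) = a
  tgt_id : ∀ a, tgt (id a) = a
  src_comp : ∀ f g h, src (comp f g h) = src f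
  tgt_comp : ∀ f g h, tgt (comp f g h) = tgt g
  id_comp : ∀ (f : Arr) (h : tgt (id (src f)) = src f), comp (id (src f)) f h = f
  comp_id : ∀ (f : Arr) (h : tgt f = src (id (tgt f))), comp f (id (tgt f)) h = f
  assoc : ∀ (f g k : Arr) (h1 : tgt f = src g) (h2 : tgt g = src k) h3 h4,
    comp (comp f g h1) k h3 = comp f (comp g k h2) h4

/-- The underlying set of the consolidation monoid `C^cd`:
arrows of `C` together with an adjoined zero and identity. -/
inductive Cd {Obj : Type} (C : FinCat Obj) where
  | zero : Cd C
  | one : Cd C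
  | arr : C.Arr → Cd C

variable {Obj : Type} [DecidableEq Obj]

/-- Multiplication of the consolidation: composition where defined, `0` otherwise,
with `1` an adjoined identity and `0` absorbing. -/
def cdMul (C : FinCat Obj) : Cd C → Cd C → Cd C
  | .one, x => x
  | .zero, _ => .zero
  | x, .one => x
  | _, .zero => .zero
  | .arr f, .arr g => if h : C.tgt f = C.src g then .arr (C.comp f g h) else .zero

theorem cdMul_zero (C : FinCat Obj) (x : Cd C) : cdMul C x Cd.zero = Cd.zero := by
  cases x <;> rfl
theorem cdZero_mul (C : FinCat Obj) (x : Cd C) : cdMul C Cd.zero x = Cd.zero := by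
  cases x <;> rfl
theorem cdMul_one (C : FinCat Obj) (x : Cd C) : cdMul C x Cd.one = x := by
  cases x <;> rfl
theorem cdOne_mul (C : FinCat Obj) (x : Cd C) : cdMul C Cd.one x = x := by
  cases x <;> rfl

theorem cdMul_assoc (C : FinCat Obj) (x y z : Cd C) :
    cdMul C (cdMul C x y) z = cdMul C x (cdMul C y z) := by
  cases x <;> cases y <;> cases z <;>
    (try simp only [cdMul_zero, cdZero_mul, cdMul_one, cdOne_mul]) <;> (try rfl)
  case arr.arr.arr f g k =>
    by_cases h1 : C.tgt f = C.src g
    · by_cases h2 : C.tgt g = C.src k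
      · show cdMul C (dite _ _ _) _ = cdMul C _ (dite _ _ _)
        rw [dif_pos h1, dif_pos h2]
        show dite _ _ _ = dite _ _ _
        rw [dif_pos (show C.tgt (C.comp f g h1) = C.src k by rw [C.tgt_comp]; exact h2),
            dif_pos (show C.tgt f = C.src (C.comp g k h2) by rw [C.src_comp]; exact h1)]
        exact congrArg Cd.arr (C.assoc f g k h1 h2 _ _)
      · show cdMul C (dite _ _ _) _ = cdMul C _ (dite _ _ _)
        rw [dif_pos h1, dif_neg h2]
        show dite _ _ _ = Cd.zero
        rw [dif_neg (show ¬ C.tgt (C.comp f g h1) = C.src k by rw [C.tgt_comp]; exact h2)]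
    · show cdMul C (dite _ _ _) _ = cdMul C _ (cdMul C _ _)
      rw [dif_neg h1]
      by_cases h2 : C.tgt g = C.src k
      · show Cd.zero = cdMul C _ (dite _ _ _)
        rw [dif_pos h2]
        show Cd.zero = dite _ _ _
        rw [dif_neg (show ¬ C.tgt f = C.src (C.comp g k h2) by rw [C.src_comp]; exact h1)]
      · show Cd.zero = cdMul C _ (dite _ _ _)
        rw [dif_neg h2, cdMul_zero]

instance cdMonoid (C : FinCat Obj) : Monoid (Cd C) where
  mul := cdMul C
  one := .one
  one_mul x := by cases x <;> rfl
  mul_one x := by cases x <;> rfl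
  mul_assoc := cdMul_assoc C

/-- Green's R-equivalence in a monoid. -/
def RE {M : Type} [Monoid M] (s t : M) : Prop := (∃ a, s * a = t) ∧ (∃ a, t * a = s)
/-- Green's L-equivalence in a monoid. -/
def LE' {M : Type} [Monoid M] (s t : M) : Prop := (∃ a, a * s = t) ∧ (∃ a, a * t = s)
/-- Green's H-equivalence in a monoid. -/
def HE {M : Type} [Monoid M] (s t : M) : Prop := RE s t ∧ LE' s t
/-- Green's J-equivalence in a monoid. -/
def JE {M : Type} [Monoid M] (s t : M) : Prop :=
  (∃ a b, a * s * b = t) ∧ (∃ a b, a * t * b = s)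

/-- Green's R-equivalence relative to a subset `S` (multipliers taken in `S`). -/
def REOn {M : Type} [Monoid M] (S : Set M) (s t : M) : Prop :=
  (∃ a ∈ S, s * a = t) ∧ (∃ a ∈ S, t * a = s)
def LEOn {M : Type} [Monoid M] (S : Set M) (s t : M) : Prop :=
  (∃ a ∈ S, a * s = t) ∧ (∃ a ∈ S, a * t = s)
def HEOn {M : Type} [Monoid M] (S : Set M) (s t : M) : Prop := REOn S s t ∧ LEOn S s t
def JEOn {M : Type} [Monoid M] (S : Set M) (s t : M) : Prop :=
  (∃ a ∈ S, ∃ b ∈ S, a * s * b = t) ∧ (∃ a ∈ S, ∃ b ∈ S, a * t * b = s)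

/-- The local monoid `C_c = C(c,c)`, viewed as a subset of the consolidation. -/
def locSet (C : FinCat Obj) (c : Obj) : Set (Cd C) :=
  {x | ∃ f : C.Arr, x = Cd.arr f ∧ C.src f = c ∧ C.tgt f = c}

/-! An idempotent of `C^cd` other than `0` and `1` is an idempotent endomorphism `e` of some
object `c`. Whatever is `H`-related to `e` has the form `e * a` and `b * e`, so it is again an
arrow `c ⟶ c`; and when both ends of a factorisation `x * a = y` are arrows `c ⟶ c`, the
multiplier can be taken in `C(c, c)` too: `a = 1` is replaced by the identity of `c`, and an
arrow `a` is forced to be an endomorphism of `c`. -/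

namespace Cd

variable {C : FinCat Obj}

theorem arr_mul_arr_of_eq {f g : C.Arr} (h : C.tgt f = C.src g) :
    (arr f : Cd C) * arr g = arr (C.comp f g h) :=
  dif_pos h

theorem arr_mul_arr_of_ne {f g : C.Arr} (h : C.tgt f ≠ C.src g) :
    (arr f : Cd C) * arr g = zero :=
  dif_neg h

theorem arr_mul_id_tgt (f : C.Arr) : (arr f : Cd C) * arr (C.id (C.tgt f)) = arr f := by
  rw [arr_mul_arr_of_eq (C.src_id _).symm, C.comp_id]

theorem id_src_mul_arr (f : C.Arr) : (arr (C.id (C.src f)) : Cd C) * arr f = arr f := by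
  rw [arr_mul_arr_of_eq (C.tgt_id _), C.id_comp]

theorem arr_mul_eq_zero_or (f : C.Arr) (a : Cd C) :
    arr f * a = zero ∨ ∃ g, arr f * a = arr g ∧ C.src g = C.src f := by
  rcases a with _ | _ | u
  · exact .inl rfl
  · exact .inr ⟨f, rfl, rfl⟩
  · by_cases h : C.tgt f = C.src u
    · exact .inr ⟨_, arr_mul_arr_of_eq h, C.src_comp _ _ _⟩
    · exact .inl (arr_mul_arr_of_ne h)

theorem mul_arr_eq_zero_or (f : C.Arr) (a : Cd C) :
    a * arr f = zero ∨ ∃ g, a * arr f = arr g ∧ C.tgt g = C.tgt f := by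
  rcases a with _ | _ | u
  · exact .inl rfl
  · exact .inr ⟨f, rfl, rfl⟩
  · by_cases h : C.tgt u = C.src f
    · exact .inr ⟨_, arr_mul_arr_of_eq h, C.tgt_comp _ _ _⟩
    · exact .inl (arr_mul_arr_of_ne h)

end Cd

open Cd

section LocalMonoid

variable {C : FinCat Obj} {c : Obj}

omit [DecidableEq Obj] in
theorem arr_mem_locSet_iff {f : C.Arr} : arr f ∈ locSet C c ↔ C.src f = c ∧ C.tgt f = c := by
  constructor
  · rintro ⟨g, hfg, hs, ht⟩
    cases hfg
    exact ⟨hs, ht⟩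
  · exact fun ⟨hs, ht⟩ => ⟨f, rfl, hs, ht⟩

theorem exists_mem_locSet_of_isIdempotentElem {e : Cd C} (he : IsIdempotentElem e) (h0 : e ≠ zero)
    (h1 : e ≠ one) : ∃ c, e ∈ locSet C c := by
  rcases e with _ | _ | f
  · exact absurd rfl h0
  · exact absurd rfl h1
  · by_cases hf : C.tgt f = C.src f
    · exact ⟨C.src f, arr_mem_locSet_iff.2 ⟨rfl, hf⟩⟩
    · rw [IsIdempotentElem, arr_mul_arr_of_ne hf] at he
      cases he

theorem exists_mem_locSet_mul_eq {x y a : Cd C} (hx : x ∈ locSet C c) (hy : y ∈ locSet C c)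
    (h : x * a = y) : ∃ a' ∈ locSet C c, x * a' = y := by
  obtain ⟨g, rfl, -, hgt⟩ := hx
  obtain ⟨f, rfl, -, hft⟩ := hy
  rcases a with _ | _ | u
  · cases h
  · refine ⟨arr (C.id c), arr_mem_locSet_iff.2 ⟨C.src_id c, C.tgt_id c⟩, ?_⟩
    rw [← hgt, arr_mul_id_tgt, ← h]; rfl
  · by_cases hgu : C.tgt g = C.src u
    · rw [arr_mul_arr_of_eq hgu, arr.injEq] at h
      have hut : C.tgt u = c := by rw [← hft, ← h, C.tgt_comp]
      exact ⟨arr u, arr_mem_locSet_iff.2 ⟨hgu ▸ hgt, hut⟩, by rw [arr_mul_arr_of_eq hgu, h]⟩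
    · simp [arr_mul_arr_of_ne hgu] at h

theorem exists_mem_locSet_mul_eq' {x y a : Cd C} (hx : x ∈ locSet C c) (hy : y ∈ locSet C c)
    (h : a * x = y) : ∃ a' ∈ locSet C c, a' * x = y := by
  obtain ⟨g, rfl, hgs, -⟩ := hx
  obtain ⟨f, rfl, hfs, -⟩ := hy
  rcases a with _ | _ | u
  · cases h
  · refine ⟨arr (C.id c), arr_mem_locSet_iff.2 ⟨C.src_id c, C.tgt_id c⟩, ?_⟩
    rw [← hgs, id_src_mul_arr, ← h]; rfl
  · by_cases hug : C.tgt u = C.src g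
    · rw [arr_mul_arr_of_eq hug, arr.injEq] at h
      have hus : C.src u = c := by rw [← hfs, ← h, C.src_comp]
      exact ⟨arr u, arr_mem_locSet_iff.2 ⟨hus, hug ▸ hgs⟩, by rw [arr_mul_arr_of_eq hug, h]⟩
    · simp [arr_mul_arr_of_ne hug] at h

theorem mem_locSet_of_HE {z e : Cd C} (he : e ∈ locSet C c) (h : HE z e) : z ∈ locSet C c := by
  obtain ⟨f, rfl, hfs, hft⟩ := he
  obtain ⟨⟨⟨a, hza⟩, ⟨a', hez⟩⟩, ⟨-, ⟨b', hbe⟩⟩⟩ := h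
  have hz : z ≠ zero := by
    rintro rfl
    cases hza
  obtain hez0 | ⟨g, hez', hgs⟩ := arr_mul_eq_zero_or f a'
  · exact absurd (hez ▸ hez0) hz
  obtain hbe0 | ⟨g', hbe', hgt⟩ := mul_arr_eq_zero_or f b'
  · exact absurd (hbe ▸ hbe0) hz
  have hgg' : g = g' := arr.inj (hez'.symm.trans (hez.trans (hbe.symm.trans hbe')))
  subst hgg'
  rw [← hez, hez']
  exact arr_mem_locSet_iff.2 ⟨hgs.trans hfs, hgt.trans hft⟩

theorem HEOn_locSet_of_HE {z e : Cd C} (hz : z ∈ locSet C c) (he : e ∈ locSet C c)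
    (h : HE z e) : HEOn (locSet C c) z e :=
  ⟨⟨h.1.1.elim fun _ => exists_mem_locSet_mul_eq hz he,
      h.1.2.elim fun _ => exists_mem_locSet_mul_eq he hz⟩,
    ⟨h.2.1.elim fun _ => exists_mem_locSet_mul_eq' hz he,
      h.2.2.elim fun _ => exists_mem_locSet_mul_eq' he hz⟩⟩

end LocalMonoid

theorem HEOn.HE {M : Type} [Monoid M] {S : Set M} {s t : M} (h : HEOn S s t) : HE s t :=
  ⟨⟨h.1.1.imp fun _ => And.right, h.1.2.imp fun _ => And.right⟩,
    ⟨h.2.1.imp fun _ => And.right, h.2.2.imp fun _ => And.right⟩⟩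

theorem stmt_11 (C : FinCat Obj)
    (e : Cd C) (he : e * e = e) (h0 : e ≠ Cd.zero) (h1 : e ≠ Cd.one) :
    ∃ c : Obj, e ∈ locSet C c ∧
      {z : Cd C | HE z e} = {z ∈ locSet C c | HEOn (locSet C c) z e} := by
  obtain ⟨c, hec⟩ := exists_mem_locSet_of_isIdempotentElem he h0 h1
  refine ⟨c, hec, Set.ext fun z => ⟨fun h => ?_, fun h => h.2.HE⟩⟩
  have hzc := mem_locSet_of_HE hec h
  exact ⟨hzc, HEOn_locSet_of_HE hzc hec h⟩
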